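/- Let x_1, …, x_n : Ω → ℝ^M be independent random vectors on a probability space Ω such that every coordinate is bounded: |x_j(ω)[m]| ≤ B for all ω, j and m, where B > 0. Let W : ℝ^M → ℝ^{M'} be a linear map whose operator norm with respect to the Euclidean norms equals ρ > 0. Define h = W((1/n) Σ_{j=1}^n x_j). Then for every t > 0, P( ‖h − E[h]‖₂ ≥ t ) ≤ 2 · M · exp( − n · t² / (2 · ρ² · B² · M) ). -/

import Mathlib

/-!
Since `h - E h = W (n⁻¹ ∑ⱼ (xⱼ - E xⱼ))` and `‖W‖ = ρ`, a deviation of size `t` forces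
`‖∑ⱼ (xⱼ - E xⱼ)‖ ≥ n t / ρ`, hence some coordinate `m` satisfies
`|∑ⱼ (xⱼ m - E xⱼ m)| ≥ n t / (ρ √M)`. Each coordinate sum is a sum of `n` independent variables
bounded by `B`, so by Hoeffding's inequality this has probability at most
`2 exp (-n t² / (2 ρ² B² M))`; a union bound over the `M` coordinates gives the factor `M`.
-/

open MeasureTheory Finset Real ProbabilityTheory
open scoped NNReal

namespace EuclideanSpace

variable {ι : Type*} [Fintype ι]

lemma norm_le_sqrt_card_mul {v : EuclideanSpace ℝ ι} {C : ℝ} (hC : 0 ≤ C)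
    (h : ∀ i, |v i| ≤ C) : ‖v‖ ≤ √(Fintype.card ι) * C := by
  refine ((basisFun ι ℝ).norm_le_card_mul_iSup_norm_inner v).trans ?_
  gcongr
  exact Real.iSup_le (by simpa using h) hC

lemma exists_le_abs_apply_of_le_norm {v : EuclideanSpace ℝ ι} {r : ℝ} (hr : 0 < r)
    (h : r ≤ ‖v‖) : ∃ i, r / √(Fintype.card ι) ≤ |v i| := by
  rcases isEmpty_or_nonempty ι with _ | _
  · rw [Subsingleton.elim v 0, norm_zero] at h
    linarith
  obtain ⟨i, hi⟩ := exists_eq_ciSup_of_finite (f := fun i ↦ |v i|)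
  refine ⟨i, ?_⟩
  rw [div_le_iff₀ (by positivity), hi, mul_comm]
  simpa using h.trans ((basisFun ι ℝ).norm_le_card_mul_iSup_norm_inner v)

lemma integral_apply {Ω : Type*} [MeasurableSpace Ω] {μ : Measure Ω}
    {f : Ω → EuclideanSpace ℝ ι} (hf : Integrable f μ) (i : ι) :
    (∫ ω, f ω ∂μ) i = ∫ ω, f ω i ∂μ :=
  ((proj i).integral_comp_comm hf).symm

end EuclideanSpace

namespace ProbabilityTheory

variable {Ω : Type*} [MeasurableSpace Ω] {μ : Measure Ω}

lemma HasSubgaussianMGF.measureReal_abs_ge_le {X : Ω → ℝ} {c : ℝ≥0}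
    (h : HasSubgaussianMGF X c μ) {ε : ℝ} (hε : 0 ≤ ε) :
    μ.real {ω | ε ≤ |X ω|} ≤ 2 * exp (-ε ^ 2 / (2 * c)) := by
  have hsplit : {ω | ε ≤ |X ω|} = {ω | ε ≤ X ω} ∪ {ω | ε ≤ (-X) ω} := by
    ext ω
    simp [le_abs]
  calc μ.real {ω | ε ≤ |X ω|}
      ≤ μ.real {ω | ε ≤ X ω} + μ.real {ω | ε ≤ (-X) ω} := hsplit ▸ measureReal_union_le _ _
    _ ≤ exp (-ε ^ 2 / (2 * c)) + exp (-ε ^ 2 / (2 * c)) :=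
        add_le_add (h.measure_ge_le hε) (h.neg.measure_ge_le hε)
    _ = 2 * exp (-ε ^ 2 / (2 * c)) := by ring

/-- Two-sided **Hoeffding inequality**. -/
lemma measureReal_abs_sum_sub_integral_ge_le [IsProbabilityMeasure μ] {ι : Type*} [Fintype ι]
    {Z : ι → Ω → ℝ} (hZ : ∀ i, Measurable (Z i)) (hindep : iIndepFun Z μ) {B : ℝ}
    (hbdd : ∀ i ω, |Z i ω| ≤ B) {ε : ℝ} (hε : 0 ≤ ε) :
    μ.real {ω | ε ≤ |∑ i, (Z i ω - μ[Z i])|}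
      ≤ 2 * exp (-ε ^ 2 / (2 * (Fintype.card ι * B ^ 2))) := by
  have hsubG : ∀ i ∈ (univ : Finset ι),
      HasSubgaussianMGF (fun ω ↦ Z i ω - μ[Z i]) ((‖B - -B‖₊ / 2) ^ 2) μ := fun i _ ↦
    hasSubgaussianMGF_of_mem_Icc (hZ i).aemeasurable (ae_of_all _ fun ω ↦ abs_le.mp (hbdd i ω))
  have hindep' : iIndepFun (fun i ω ↦ Z i ω - μ[Z i]) μ :=
    hindep.comp _ fun i ↦ measurable_id.sub_const _
  have hparam : (|B + B| / 2) ^ 2 = B ^ 2 := by rw [div_pow, sq_abs]; ring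
  simpa [hparam] using (HasSubgaussianMGF.sum_of_iIndepFun hindep' hsubG).measureReal_abs_ge_le hε

end ProbabilityTheory

lemma ContinuousLinearMap.norm_map_smul_sum_sub_integral_le {Ω E F ι : Type*}
    [MeasurableSpace Ω] {μ : Measure Ω} [NormedAddCommGroup E] [NormedSpace ℝ E] [CompleteSpace E]
    [NormedAddCommGroup F] [NormedSpace ℝ F] [CompleteSpace F] [Fintype ι]
    (L : E →L[ℝ] F) (c : ℝ) {f : ι → Ω → E} (hf : ∀ i, Integrable (f i) μ) (ω : Ω) :
    ‖L (c • ∑ i, f i ω) - ∫ ω', L (c • ∑ i, f i ω') ∂μ‖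
      ≤ ‖L‖ * |c| * ‖∑ i, (f i ω - ∫ ω', f i ω' ∂μ)‖ := by
  have hsum : Integrable (fun ω ↦ c • ∑ i, f i ω) μ :=
    (integrable_finsetSum _ fun i _ ↦ hf i).smul c
  rw [L.integral_comp_comm hsum, integral_smul, integral_finsetSum _ fun i _ ↦ hf i, ← map_sub,
    ← smul_sub, ← sum_sub_distrib, mul_assoc, ← Real.norm_eq_abs, ← norm_smul]
  exact L.le_opNorm _

/-- **Theorem 2 (RIGBD).** For `n` independent random feature vectors `x_1, …, x_n`
in `ℝ^M` whose coordinates are all bounded in absolute value by `B`, and a linear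
map `W` with operator (matrix 2-) norm `ρ`, the embedding `h = W((1/n) ∑ x_j)`
concentrates around its expectation:
`P(‖h − E[h]‖₂ ≥ t) ≤ 2·M·exp(−n·t² / (2·ρ²·B²·M))`. -/
theorem embedding_concentration
    {Ω : Type*} [MeasureSpace Ω] (μ : Measure Ω) [IsProbabilityMeasure μ]
    {n : ℕ} (hn : 0 < n) {M M' : ℕ}
    (x : Fin n → Ω → EuclideanSpace ℝ (Fin M))
    (hx_meas : ∀ j, Measurable (x j))
    (hx_indep : ProbabilityTheory.iIndepFun x μ)
    (B : ℝ) (hB : 0 < B)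
    (hx_bdd : ∀ j, ∀ ω, ∀ m : Fin M, |x j ω m| ≤ B)
    (W : EuclideanSpace ℝ (Fin M) →L[ℝ] EuclideanSpace ℝ (Fin M'))
    (ρ : ℝ) (hρ : 0 < ρ) (hW : ‖W‖ = ρ)
    (t : ℝ) (ht : 0 < t) :
    μ {ω | t ≤ ‖W ((n : ℝ)⁻¹ • ∑ j, x j ω)
              - ∫ ω', W ((n : ℝ)⁻¹ • ∑ j, x j ω') ∂μ‖}
      ≤ ENNReal.ofReal
          (2 * M * Real.exp (-(n * t ^ 2) / (2 * ρ ^ 2 * B ^ 2 * M))) := by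
  have hx_int : ∀ j, Integrable (x j) μ := fun j ↦
    .of_bound (hx_meas j).aestronglyMeasurable _
      (ae_of_all _ fun ω ↦ EuclideanSpace.norm_le_sqrt_card_mul hB.le (hx_bdd j ω))
  set a := t / (ρ / n) / √M
  have hsub : {ω | t ≤ ‖W ((n : ℝ)⁻¹ • ∑ j, x j ω) - ∫ ω', W ((n : ℝ)⁻¹ • ∑ j, x j ω') ∂μ‖}
      ⊆ ⋃ m, {ω | a ≤ |∑ j, (x j ω m - ∫ ω', x j ω' m ∂μ)|} := fun ω hω ↦ by
    have hD : t / (ρ / n) ≤ ‖∑ j, (x j ω - ∫ ω', x j ω' ∂μ)‖ := by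
      refine (div_le_iff₀' (by positivity)).2 (hω.out.trans ?_)
      have := W.norm_map_smul_sum_sub_integral_le (n : ℝ)⁻¹ hx_int ω
      rwa [hW, abs_inv, Nat.abs_cast, ← div_eq_mul_inv] at this
    obtain ⟨m, hm⟩ := EuclideanSpace.exists_le_abs_apply_of_le_norm (by positivity) hD
    exact Set.mem_iUnion.2 ⟨m, by simpa [EuclideanSpace.integral_apply (hx_int _)] using hm⟩
  have htail : ∀ m : Fin M, μ.real {ω | a ≤ |∑ j, (x j ω m - ∫ ω', x j ω' m ∂μ)|}
      ≤ 2 * exp (-(n * t ^ 2) / (2 * ρ ^ 2 * B ^ 2 * M)) := fun m ↦ by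
    have hM : (0 : ℝ) < M := by exact_mod_cast m.pos
    refine (measureReal_abs_sum_sub_integral_ge_le (fun j ↦ ?_) ?_ (fun j ω ↦ hx_bdd j ω m)
      (by positivity)).trans_eq ?_
    · exact (EuclideanSpace.proj m).continuous.measurable.comp (hx_meas j)
    · exact hx_indep.comp _ fun j ↦ (EuclideanSpace.proj m).continuous.measurable
    · simp only [Fintype.card_fin, a, div_pow, sq_sqrt hM.le]
      field_simp
  calc _ ≤ μ (⋃ m, {ω | a ≤ |∑ j, (x j ω m - ∫ ω', x j ω' m ∂μ)|}) := measure_mono hsub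
    _ = ENNReal.ofReal (μ.real (⋃ m, {ω | a ≤ |∑ j, (x j ω m - ∫ ω', x j ω' m ∂μ)|})) :=
        (ofReal_measureReal).symm
    _ ≤ _ := by
        refine ENNReal.ofReal_le_ofReal ((measureReal_iUnion_fintype_le _).trans ?_)
        refine (sum_le_sum fun m _ ↦ htail m).trans_eq ?_
        rw [sum_const, card_univ, Fintype.card_fin, nsmul_eq_mul]
        ring
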